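/- Let a : H × H → ℝ be a bounded coercive bilinear form on a Hilbert space H with coercivity constant α and boundedness constant C, let f ∈ H*, let u ∈ H solve a(u,v) = f(v) for all v ∈ H, and let u_h ∈ V solve the projected problem a(u_h,v) = f(v) for all v in a closed subspace V. Then ‖u - u_h‖ ≤ (C/α) · inf_{v ∈ V} ‖u - v‖. -/

import Mathlib

/-!
Galerkin orthogonality: `a (u - u_h) w = 0` for every `w ∈ V`. Hence for `v ∈ V`, with
`e = u - u_h`, coercivity and boundedness give
`α ‖e‖² ≤ a e e = a e (u - v) ≤ C ‖e‖ ‖u - v‖`, and it remains to divide by `‖e‖` and take the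
infimum over `v`.
-/

theorem Real.le_mul_iInf_of_forall_le_mul {ι : Type*} [Nonempty ι] {g : ι → ℝ} {x r : ℝ}
    (hg : ∀ i, 0 ≤ g i) (h : ∀ i, x ≤ r * g i) : x ≤ r * ⨅ i, g i := by
  rcases le_total 0 r with hr | hr
  · rw [Real.mul_iInf_of_nonneg hr]
    exact le_ciInf h
  · obtain ⟨i⟩ := ‹Nonempty ι›
    exact (h i).trans (mul_le_mul_of_nonpos_left (ciInf_le ⟨0, by rintro _ ⟨j, rfl⟩; exact hg j⟩ i) hr)

theorem galerkin_orthogonality {R M N : Type*} [CommRing R] [AddCommGroup M] [Module R M]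
    [AddCommGroup N] [Module R N] (a : M →ₗ[R] M →ₗ[R] N) (f : M → N) (V : Submodule R M)
    {u uh : M} (hu : ∀ v ∈ V, a u v = f v) (huh : ∀ v ∈ V, a uh v = f v) :
    ∀ v ∈ V, a (u - uh) v = 0 := by
  intro v hv
  rw [map_sub, LinearMap.sub_apply, hu v hv, huh v hv, sub_self]

section CoerciveBounded

variable {E : Type*} [SeminormedAddCommGroup E] [Module ℝ E] (a : E →ₗ[ℝ] E →ₗ[ℝ] ℝ) {C α : ℝ}
  (hbd : ∀ u v : E, |a u v| ≤ C * ‖u‖ * ‖v‖) (hcoer : ∀ u : E, α * ‖u‖ ^ 2 ≤ a u u)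
include hbd hcoer

theorem mul_norm_le_mul_norm_of_coercive_of_bounded (x : E) : α * ‖x‖ ≤ C * ‖x‖ := by
  rcases (norm_nonneg x).eq_or_lt with hx | hx
  · rw [← hx, mul_zero, mul_zero]
  · have : α * ‖x‖ * ‖x‖ ≤ C * ‖x‖ * ‖x‖ := by
      calc α * ‖x‖ * ‖x‖ = α * ‖x‖ ^ 2 := by ring
        _ ≤ a x x := hcoer x
        _ ≤ C * ‖x‖ * ‖x‖ := (le_abs_self _).trans (hbd x x)
    exact le_of_mul_le_mul_right this hx

theorem mul_norm_sub_le_of_galerkin_orthogonal (hα : 0 < α) (V : Submodule ℝ E) {u uh v : E}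
    (horth : ∀ w ∈ V, a (u - uh) w = 0) (huh : uh ∈ V) (hv : v ∈ V) :
    α * ‖u - uh‖ ≤ C * ‖u - v‖ := by
  set e := u - uh
  rcases (norm_nonneg e).eq_or_lt with he | he
  · rw [← he, mul_zero]
    exact (mul_nonneg hα.le (norm_nonneg _)).trans
      (mul_norm_le_mul_norm_of_coercive_of_bounded a hbd hcoer _)
  · have hsplit : a e e = a e (u - v) :=
      calc a e e = a e ((u - v) + (v - uh)) := by rw [sub_add_sub_cancel]
        _ = a e (u - v) := by rw [map_add, horth _ (V.sub_mem hv huh), add_zero]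
    have : α * ‖e‖ * ‖e‖ ≤ C * ‖u - v‖ * ‖e‖ := by
      calc α * ‖e‖ * ‖e‖ = α * ‖e‖ ^ 2 := by ring
        _ ≤ a e (u - v) := hsplit ▸ hcoer e
        _ ≤ C * ‖e‖ * ‖u - v‖ := (le_abs_self _).trans (hbd e _)
        _ = C * ‖u - v‖ * ‖e‖ := by ring
    exact le_of_mul_le_mul_right this he

end CoerciveBounded

theorem cea_lemma_general
    {H : Type*} [NormedAddCommGroup H] [InnerProductSpace ℝ H]
    (a : H →ₗ[ℝ] H →ₗ[ℝ] ℝ) (C α : ℝ) (hα : 0 < α)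
    (hbd : ∀ u v : H, |a u v| ≤ C * ‖u‖ * ‖v‖)
    (hcoer : ∀ u : H, α * ‖u‖ ^ 2 ≤ a u u)
    (f : H →L[ℝ] ℝ)
    (V : Submodule ℝ H)
    (u : H) (hu : ∀ v : H, a u v = f v)
    (uh : V) (huh : ∀ v : V, a (uh : H) (v : H) = f (v : H)) :
    ‖u - (uh : H)‖ ≤ (C / α) * ⨅ v : V, ‖u - (v : H)‖ := by
  have horth := galerkin_orthogonality a f V (fun v _ => hu v) (fun v hv => huh ⟨v, hv⟩)
  refine Real.le_mul_iInf_of_forall_le_mul (fun _ => norm_nonneg _) fun v => ?_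
  rw [div_mul_eq_mul_div, le_div_iff₀ hα, mul_comm]
  exact mul_norm_sub_le_of_galerkin_orthogonal a hbd hcoer hα V horth uh.2 v.2

theorem cea_lemma
    {H : Type*} [NormedAddCommGroup H] [InnerProductSpace ℝ H] [CompleteSpace H]
    (a : H →ₗ[ℝ] H →ₗ[ℝ] ℝ) (C α : ℝ) (hα : 0 < α)
    (hbd : ∀ u v : H, |a u v| ≤ C * ‖u‖ * ‖v‖)
    (hcoer : ∀ u : H, α * ‖u‖ ^ 2 ≤ a u u)
    (f : H →L[ℝ] ℝ)
    (V : Submodule ℝ H) (hVc : IsClosed (V : Set H))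
    (u : H) (hu : ∀ v : H, a u v = f v)
    (uh : V) (huh : ∀ v : V, a (uh : H) (v : H) = f (v : H)) :
    ‖u - (uh : H)‖ ≤ (C / α) * ⨅ v : V, ‖u - (v : H)‖ :=
  cea_lemma_general a C α hα hbd hcoer f V u hu uh huh
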